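/- Let p be a prime and A = {1, p, p^2, p^3, …}. For every positive integer n, N^p_A(n) = Σ_{k=0}^{n-1} p_A(k) · (v_p(n−k) + 1), where v_p denotes the p-adic valuation, N^p_A(n) is the total number of parts over all partitions of n into powers of p, and p_A(k) is the number of such partitions of k with p_A(0)=1. -/

import Mathlib

open scoped Classical
open Finset

/-- Total number of parts over all partitions of `n` with parts from `A`. -/
noncomputable def NpA (A : Set ℕ) (n : ℕ) : ℕ :=
  ∑ p : n.Partition, if ∀ x ∈ p.parts, x ∈ A then p.parts.card else 0

/-- Number of partitions of `n` with parts from `A`. -/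
noncomputable def pA (A : Set ℕ) (n : ℕ) : ℕ :=
  ∑ p : n.Partition, if ∀ x ∈ p.parts, x ∈ A then 1 else 0

/-- Total number of parts over all partitions of `n` into distinct parts from `A`. -/
noncomputable def NqA (A : Set ℕ) (n : ℕ) : ℕ :=
  ∑ p : n.Partition, if (∀ x ∈ p.parts, x ∈ A) ∧ p.parts.Nodup then p.parts.card else 0

/-- Number of partitions of `n` into distinct parts from `A`. -/
noncomputable def qA (A : Set ℕ) (n : ℕ) : ℕ :=
  ∑ p : n.Partition, if (∀ x ∈ p.parts, x ∈ A) ∧ p.parts.Nodup then 1 else 0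

/-- Number of divisors of `m` lying in `A`. -/
noncomputable def tauA (A : Set ℕ) (m : ℕ) : ℕ :=
  (m.divisors.filter (· ∈ A)).card

/-- Sum of divisors of `m` lying in `A`. -/
noncomputable def sigmaA (A : Set ℕ) (m : ℕ) : ℕ :=
  ∑ a ∈ m.divisors.filter (· ∈ A), a

/-- Signed divisor count `τ^s_A(m) = Σ_{a ∈ A, a ∣ m} (-1)^(m/a - 1)`. -/
noncomputable def tauSA (A : Set ℕ) (m : ℕ) : ℤ :=
  ∑ a ∈ m.divisors.filter (· ∈ A), (-1 : ℤ) ^ (m / a - 1)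

/-- Signed divisor sum `σ^s_A(m) = Σ_{a ∈ A, a ∣ m} (-1)^(m/a - 1) a`. -/
noncomputable def sigmaSA (A : Set ℕ) (m : ℕ) : ℤ :=
  ∑ a ∈ m.divisors.filter (· ∈ A), (-1 : ℤ) ^ (m / a - 1) * (a : ℤ)

/-- Number of partitions of `n` into an even number of distinct parts from `A`. -/
noncomputable def qeA (A : Set ℕ) (n : ℕ) : ℕ :=
  ∑ p : n.Partition,
    if (∀ x ∈ p.parts, x ∈ A) ∧ p.parts.Nodup ∧ Even p.parts.card then 1 else 0

/-- Number of partitions of `n` into an odd number of distinct parts from `A`. -/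
noncomputable def qoA (A : Set ℕ) (n : ℕ) : ℕ :=
  ∑ p : n.Partition,
    if (∀ x ∈ p.parts, x ∈ A) ∧ p.parts.Nodup ∧ Odd p.parts.card then 1 else 0

/-- Number of partitions of `n` into an even number of parts from `A`. -/
noncomputable def peA (A : Set ℕ) (n : ℕ) : ℕ :=
  ∑ p : n.Partition, if (∀ x ∈ p.parts, x ∈ A) ∧ Even p.parts.card then 1 else 0

/-- Number of partitions of `n` into an odd number of parts from `A`. -/
noncomputable def poA (A : Set ℕ) (n : ℕ) : ℕ :=
  ∑ p : n.Partition, if (∀ x ∈ p.parts, x ∈ A) ∧ Odd p.parts.card then 1 else 0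

/-- Hamming weight: number of ones in the binary expansion of `n`. -/
def hw (n : ℕ) : ℕ := (Nat.digits 2 n).sum

/-- Number of Carlitz compositions of `m` with parts from `A`
(sequences of elements of `A` summing to `m` with no two adjacent parts equal). -/
noncomputable def clA (A : Set ℕ) (m : ℕ) : ℕ :=
  Nat.card {l : List ℕ // (∀ x ∈ l, x ∈ A) ∧ l.sum = m ∧ l.Chain' (· ≠ ·)}

/-- The set of powers of two. -/
def binA : Set ℕ := {m | ∃ j : ℕ, m = 2 ^ j}

/-- Pentagonal-number weight: `ω(0)=1`, `ω(j(3j±1)/2)=(-1)^j` for `j ≥ 1`, else `0`. -/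
def omegaP (m : ℕ) : ℤ :=
  if m = 0 then 1
  else ∑ j ∈ Finset.range (m + 1),
    if 2 * m = j * (3 * j + 1) ∨ 2 * m = j * (3 * j - 1) then (-1 : ℤ) ^ j else 0

lemma msum_le {s t : Multiset ℕ} (h : s ≤ t) : s.sum ≤ t.sum := by
  obtain ⟨u, rfl⟩ := Multiset.le_iff_exists_add.mp h
  simp

lemma mcard_le {s : Multiset ℕ} (h : ∀ x ∈ s, 0 < x) : s.card ≤ s.sum := by
  have := Multiset.card_nsmul_le_sum (s := s) (a := 1) (fun x hx => h x hx)
  simpa using this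

lemma pA_card (A : Set ℕ) (n : ℕ) :
    pA A n = (Finset.univ.filter (fun q : n.Partition => ∀ x ∈ q.parts, x ∈ A)).card := by
  rw [pA, Finset.sum_boole]; norm_cast

-- key count lemma
lemma count_card (A : Set ℕ) (n a j : ℕ) (ha : 0 < a) (haA : a ∈ A) (hj : 0 < j) :
    (Finset.univ.filter (fun q : n.Partition =>
        (∀ x ∈ q.parts, x ∈ A) ∧ j ≤ q.parts.count a)).card =
      if j * a ≤ n then pA A (n - j * a) else 0 := by
  have hrep : (Multiset.replicate j a).sum = j * a := by
    simp [Multiset.sum_replicate]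
  by_cases h : j * a ≤ n
  · rw [if_pos h, pA_card]
    refine Finset.card_bij'
      (fun q hq => ⟨q.parts - Multiset.replicate j a, ?_, ?_⟩)
      (fun q hq => ⟨q.parts + Multiset.replicate j a, ?_, ?_⟩) ?_ ?_ ?_ ?_
    · -- pos of subtracted
      intro x hx
      simp only [Finset.mem_filter] at hq
      exact q.parts_pos (Multiset.mem_of_le (Multiset.sub_le_self _ _) hx)
    · -- sum of subtracted
      simp only [Finset.mem_filter] at hq
      have hle : Multiset.replicate j a ≤ q.parts :=
        Multiset.le_count_iff_replicate_le.mp hq.2.2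
      have := tsub_add_cancel_of_le hle
      have hs : (q.parts - Multiset.replicate j a).sum + (j * a) = n := by
        rw [← hrep, ← Multiset.sum_add, this, q.parts_sum]
      omega
    · -- pos of added
      intro x hx
      rcases Multiset.mem_add.mp hx with h1 | h1
      · exact q.parts_pos h1
      · rw [Multiset.eq_of_mem_replicate h1]; exact ha
    · -- sum of added
      rw [Multiset.sum_add, q.parts_sum, hrep]; omega
    · -- hi : image in target filter
      intro q hq
      simp only [Finset.mem_filter, Finset.mem_univ, true_and] at hq ⊢
      intro x hx
      exact hq.1 x (Multiset.mem_of_le (Multiset.sub_le_self _ _) hx)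
    · -- hj : image in source filter
      intro q hq
      simp only [Finset.mem_filter, Finset.mem_univ, true_and] at hq ⊢
      refine ⟨?_, ?_⟩
      · intro x hx
        rcases Multiset.mem_add.mp hx with h1 | h1
        · exact hq x h1
        · rw [Multiset.eq_of_mem_replicate h1]; exact haA
      · rw [Multiset.count_add, Multiset.count_replicate_self]; omega
    · -- left_inv
      intro q hq
      simp only [Finset.mem_filter, Finset.mem_univ, true_and] at hq
      apply Nat.Partition.ext
      simp only
      exact tsub_add_cancel_of_le (Multiset.le_count_iff_replicate_le.mp hq.2)
    · -- right_inv
      intro q hq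
      apply Nat.Partition.ext
      simp only
      exact add_tsub_cancel_right _ _
  · rw [if_neg h]
    rw [Finset.card_eq_zero, Finset.filter_eq_empty_iff]
    intro q _
    rintro ⟨hqA, hcount⟩
    apply h
    calc j * a ≤ q.parts.count a * a := Nat.mul_le_mul_right a hcount
    _ = (Multiset.replicate (q.parts.count a) a).sum := by simp [Multiset.sum_replicate]
    _ ≤ q.parts.sum := msum_le (Multiset.le_count_iff_replicate_le.mp le_rfl)
    _ = n := q.parts_sum

lemma tau_pow (p : ℕ) (hp : p.Prime) (m : ℕ) (hm : 0 < m) :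
    ((m.divisors.filter (fun a => a ∈ {x : ℕ | ∃ j : ℕ, x = p ^ j}))).card
      = padicValNat p m + 1 := by
  have h1 : m.divisors.filter (fun a => a ∈ {x : ℕ | ∃ j : ℕ, x = p ^ j})
      = (Finset.range (padicValNat p m + 1)).image (p ^ ·) := by
    ext a
    simp only [Finset.mem_filter, Nat.mem_divisors, Set.mem_setOf_eq, Finset.mem_image,
      Finset.mem_range]
    constructor
    · rintro ⟨⟨hdvd, hm0⟩, j, rfl⟩
      refine ⟨j, ?_, rfl⟩
      have := (Nat.Prime.pow_dvd_iff_le_factorization hp hm0).mp hdvd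
      rw [Nat.factorization_def m hp] at this
      omega
    · rintro ⟨i, hi, rfl⟩
      refine ⟨⟨?_, hm.ne'⟩, ⟨i, rfl⟩⟩
      refine (Nat.Prime.pow_dvd_iff_le_factorization hp hm.ne').mpr ?_
      rw [Nat.factorization_def m hp]; omega
  rw [h1, Finset.card_image_of_injective _ (Nat.pow_right_injective hp.two_le),
    Finset.card_range]

lemma reindex (P : ℕ → ℕ) (a n : ℕ) (ha : 0 < a) :
    ∑ k ∈ Finset.range n, (if a ∣ (n - k) then P k else 0)
      = ∑ i ∈ Finset.range n, (if (i + 1) * a ≤ n then P (n - (i + 1) * a) else 0) := by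
  rw [← Finset.sum_filter, ← Finset.sum_filter]
  have key : ∀ k, k < n → a ∣ (n - k) → n - ((n - k) / a - 1 + 1) * a = k := by
    intro k hk hdvd
    have hle : a ≤ n - k := Nat.le_of_dvd (by omega) hdvd
    have h1 : 1 ≤ (n - k) / a := (Nat.one_le_div_iff ha).mpr hle
    have h2 : (n - k) / a * a = n - k := Nat.div_mul_cancel hdvd
    rw [show (n - k) / a - 1 + 1 = (n - k) / a from by omega, h2]
    omega
  refine Finset.sum_nbij' (i := fun k => (n - k) / a - 1) (j := fun i => n - (i + 1) * a)
    ?_ ?_ ?_ ?_ ?_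
  · intro k hk
    simp only [Finset.mem_filter, Finset.mem_range] at hk ⊢
    obtain ⟨hk1, hdvd⟩ := hk
    have hle : a ≤ n - k := Nat.le_of_dvd (by omega) hdvd
    have h1 : 1 ≤ (n - k) / a := (Nat.one_le_div_iff ha).mpr hle
    have h2 : (n - k) / a * a = n - k := Nat.div_mul_cancel hdvd
    have h3 : (n - k) / a ≤ n - k := Nat.div_le_self _ _
    constructor
    · omega
    · have : ((n - k) / a - 1 + 1) = (n - k) / a := by omega
      rw [this, h2]; omega
  · intro i hi
    simp only [Finset.mem_filter, Finset.mem_range] at hi ⊢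
    obtain ⟨hi1, hi2⟩ := hi
    constructor
    · have : 0 < (i + 1) * a := Nat.mul_pos (by omega) ha
      omega
    · have : n - (n - (i + 1) * a) = (i + 1) * a := by omega
      rw [this]
      exact ⟨i + 1, by ring⟩
  · intro k hk
    simp only [Finset.mem_filter, Finset.mem_range] at hk
    exact key k hk.1 hk.2
  · intro i hi
    simp only [Finset.mem_filter, Finset.mem_range] at hi
    obtain ⟨hi1, hi2⟩ := hi
    have h : n - (n - (i + 1) * a) = (i + 1) * a := by omega
    rw [h, Nat.mul_div_cancel _ ha]
    omega
  · intro k hk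
    simp only [Finset.mem_filter, Finset.mem_range] at hk
    rw [key k hk.1 hk.2]

theorem stmt5 (p : ℕ) (hp : p.Prime) (n : ℕ) (hn : 0 < n) :
    NpA {m : ℕ | ∃ j : ℕ, m = p ^ j} n =
      ∑ k ∈ Finset.range n,
        pA {m : ℕ | ∃ j : ℕ, m = p ^ j} k * (padicValNat p (n - k) + 1) := by
  set A : Set ℕ := {m : ℕ | ∃ j : ℕ, m = p ^ j} with hA
  have hApos : ∀ a ∈ A, 0 < a := by
    rintro a ⟨j, rfl⟩; exact pow_pos hp.pos j
  set Af : Finset ℕ := (Finset.range (n + 1)).filter (fun a => a ∈ A) with hAf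
  set P : Finset (n.Partition) :=
    Finset.univ.filter (fun q : n.Partition => ∀ x ∈ q.parts, x ∈ A) with hP
  have hcard : ∀ q ∈ P, q.parts.card = ∑ a ∈ Af, q.parts.count a := by
    intro q hq
    simp only [hP, Finset.mem_filter, Finset.mem_univ, true_and] at hq
    rw [← Multiset.toFinset_sum_count_eq]
    apply Finset.sum_subset
    · intro x hx
      rw [Multiset.mem_toFinset] at hx
      simp only [hAf, Finset.mem_filter, Finset.mem_range]
      refine ⟨?_, hq x hx⟩
      have h1 : x ≤ q.parts.sum := Multiset.le_sum_of_mem hx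
      rw [q.parts_sum] at h1; omega
    · intro x _ hx
      rw [Multiset.mem_toFinset] at hx
      exact Multiset.count_eq_zero_of_notMem hx
  have hL : NpA A n = ∑ a ∈ Af, ∑ i ∈ Finset.range n,
      (if (i + 1) * a ≤ n then pA A (n - (i + 1) * a) else 0) := by
    rw [NpA, ← Finset.sum_filter]
    calc ∑ q ∈ P, q.parts.card
        = ∑ q ∈ P, ∑ a ∈ Af, q.parts.count a := Finset.sum_congr rfl hcard
      _ = ∑ a ∈ Af, ∑ q ∈ P, q.parts.count a := Finset.sum_comm
      _ = ∑ a ∈ Af, ∑ i ∈ Finset.range n,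
            (if (i + 1) * a ≤ n then pA A (n - (i + 1) * a) else 0) := by
        apply Finset.sum_congr rfl
        intro a haf
        simp only [hAf, Finset.mem_filter, Finset.mem_range] at haf
        have ha : 0 < a := hApos a haf.2
        have hcn : ∀ q ∈ P, q.parts.count a ≤ n := by
          intro q hq
          calc q.parts.count a ≤ q.parts.card := Multiset.count_le_card a q.parts
          _ ≤ q.parts.sum := mcard_le (fun x hx => q.parts_pos hx)
          _ = n := q.parts_sum
        calc ∑ q ∈ P, q.parts.count a
            = ∑ q ∈ P, ∑ i ∈ Finset.range n,
                (if i + 1 ≤ q.parts.count a then 1 else 0) := by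
              apply Finset.sum_congr rfl
              intro q hq
              have hc := hcn q hq
              have hfe : (Finset.range n).filter (fun i => i + 1 ≤ q.parts.count a)
                  = Finset.range (q.parts.count a) := by
                ext i
                simp only [Finset.mem_filter, Finset.mem_range]
                omega
              rw [← Finset.sum_filter, hfe]
              simp
          _ = ∑ i ∈ Finset.range n, ∑ q ∈ P,
                (if i + 1 ≤ q.parts.count a then 1 else 0) := Finset.sum_comm
          _ = ∑ i ∈ Finset.range n,
                (if (i + 1) * a ≤ n then pA A (n - (i + 1) * a) else 0) := by
              apply Finset.sum_congr rfl
              intro i _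
              rw [← Finset.card_filter, hP, Finset.filter_filter]
              exact count_card A n a (i + 1) ha haf.2 (by omega)
  have hdivs : ∀ k ∈ Finset.range n,
      (n - k).divisors.filter (· ∈ A) = Af.filter (· ∣ (n - k)) := by
    intro k hk
    rw [Finset.mem_range] at hk
    ext a
    simp only [Finset.mem_filter, Nat.mem_divisors, hAf, Finset.mem_range]
    constructor
    · rintro ⟨⟨hdvd, hne⟩, haA⟩
      have h0 : 0 < a := hApos a haA
      have := Nat.le_of_dvd (by omega) hdvd
      exact ⟨⟨by omega, haA⟩, hdvd⟩
    · rintro ⟨⟨_, haA⟩, hdvd⟩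
      exact ⟨⟨hdvd, by omega⟩, haA⟩
  have hR : ∑ k ∈ Finset.range n, pA A k * (padicValNat p (n - k) + 1)
      = ∑ a ∈ Af, ∑ i ∈ Finset.range n,
          (if (i + 1) * a ≤ n then pA A (n - (i + 1) * a) else 0) := by
    calc ∑ k ∈ Finset.range n, pA A k * (padicValNat p (n - k) + 1)
        = ∑ k ∈ Finset.range n, ∑ a ∈ (n - k).divisors.filter (· ∈ A), pA A k := by
          apply Finset.sum_congr rfl
          intro k hk
          rw [Finset.mem_range] at hk
          have htau : ((n - k).divisors.filter (· ∈ A)).card = padicValNat p (n - k) + 1 :=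
            tau_pow p hp (n - k) (by omega)
          rw [Finset.sum_const, smul_eq_mul, htau, Nat.mul_comm]
      _ = ∑ k ∈ Finset.range n, ∑ a ∈ Af, (if a ∣ (n - k) then pA A k else 0) := by
          apply Finset.sum_congr rfl
          intro k hk
          rw [hdivs k hk, Finset.sum_filter]
      _ = ∑ a ∈ Af, ∑ k ∈ Finset.range n, (if a ∣ (n - k) then pA A k else 0) :=
          Finset.sum_comm
      _ = ∑ a ∈ Af, ∑ i ∈ Finset.range n,
            (if (i + 1) * a ≤ n then pA A (n - (i + 1) * a) else 0) := by
          apply Finset.sum_congr rfl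
          intro a haf
          simp only [hAf, Finset.mem_filter, Finset.mem_range] at haf
          exact reindex (pA A) a n (hApos a haf.2)
  rw [hL, hR]
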